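/- Let K = ℤ[x₁,x₂,…] be the polynomial ring over ℤ in countably infinitely many commuting variables, let A be the K-algebra whose underlying K-module is K itself and whose multiplication is identically zero (ab = 0 for all a,b ∈ A), and let B be the K-subalgebra of A generated by the set of variables {x₁,x₂,…}. Then A is finitely presented as a K-algebra, the quotient K-module A/B is cyclic, but B is not finitely generated as a K-algebra. -/

import Mathlib

/-- The free non-unital associative `K`-algebra on `X`: the semigroup algebra of the free
semigroup `X⁺` over `K`. -/
abbrev FreeNUAlg (K X : Type*) [CommRing K] : Type _ := MonoidAlgebra K (FreeSemigroup X)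

/-- The two-sided ideal (as a `K`-submodule closed under left and right multiplication)
generated by a set in a non-unital `K`-algebra. -/
def idealSpan (K : Type*) {A : Type*} [CommRing K] [NonUnitalRing A] [Module K A]
    (s : Set A) : Submodule K A :=
  sInf {J : Submodule K A | s ⊆ J ∧ ∀ a b : A, b ∈ J → a * b ∈ J ∧ b * a ∈ J}

/-- A non-unital `K`-algebra is finitely generated if some finite subset generates it as a
`K`-algebra. -/
def NUAlgFG (K A : Type*) [CommRing K] [NonUnitalRing A] [Module K A]
    [IsScalarTower K A A] [SMulCommClass K A A] : Prop :=
  ∃ s : Finset A, NonUnitalAlgebra.adjoin K (s : Set A) = ⊤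

/-- A non-unital `K`-algebra is finitely presented if it is isomorphic to the quotient of a
free algebra `K⟨X⟩` on a finite set `X` by a finitely generated two-sided ideal, i.e. there
is a surjection from some `K⟨X⟩`, `X` finite, whose kernel is a finitely generated
two-sided ideal. -/
def NUAlgFP (K A : Type*) [CommRing K] [NonUnitalRing A] [Module K A]
    [IsScalarTower K A A] [SMulCommClass K A A] : Prop :=
  ∃ (n : ℕ) (f : FreeNUAlg K (Fin n) →ₙₐ[K] A),
    Function.Surjective f ∧
      ∃ s : Finset (FreeNUAlg K (Fin n)),
        ∀ x, f x = 0 ↔ x ∈ idealSpan K (s : Set (FreeNUAlg K (Fin n)))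

/-- `K = ℤ[x₁,x₂,…]`, the polynomial ring over `ℤ` in countably many commuting variables. -/
abbrev K16 : Type := MvPolynomial ℕ ℤ

/-- `A`: the `K`-module `K` itself, to be equipped with the identically zero multiplication. -/
def A16 : Type := MvPolynomial ℕ ℤ

noncomputable instance : AddCommGroup A16 := inferInstanceAs (AddCommGroup (MvPolynomial ℕ ℤ))
noncomputable instance : Module K16 A16 := inferInstanceAs (Module (MvPolynomial ℕ ℤ) (MvPolynomial ℕ ℤ))

/-- The identically zero multiplication on `A16`. -/
noncomputable instance : Mul A16 := ⟨fun _ _ => 0⟩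

theorem A16.mul_def (a b : A16) : a * b = 0 := rfl

noncomputable instance : NonUnitalRing A16 :=
  { (inferInstance : AddCommGroup A16), (inferInstance : Mul A16) with
    mul_assoc := fun a b c => by rw [A16.mul_def, A16.mul_def]
    left_distrib := fun a b c => by
      rw [A16.mul_def, A16.mul_def, A16.mul_def, add_zero]
    right_distrib := fun a b c => by
      rw [A16.mul_def, A16.mul_def, A16.mul_def, add_zero]
    zero_mul := fun a => rfl
    mul_zero := fun a => rfl }

instance : IsScalarTower K16 A16 A16 :=
  ⟨fun k a b => by
    show (k • a) * b = k • (a * b)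
    rw [A16.mul_def, A16.mul_def, smul_zero]⟩

instance : SMulCommClass K16 A16 A16 :=
  ⟨fun k a b => by
    show k • (a * b) = a * (k • b)
    rw [A16.mul_def, A16.mul_def, smul_zero]⟩

/-- The inclusion of the underlying set of `K = ℤ[x₁,x₂,…]` into `A16`. -/
def toA16 (p : MvPolynomial ℕ ℤ) : A16 := p

/-- `B`: the `K`-subalgebra of `A` generated by the set of variables `{x₁, x₂, …}`. -/
noncomputable def B16 : NonUnitalSubalgebra K16 A16 :=
  NonUnitalAlgebra.adjoin K16 (Set.range fun i : ℕ => toA16 (MvPolynomial.X i))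

/-!
`A` is `K·x` with `x² = 0`, i.e. `K⟨x⟩/(x²)`: taking the coefficient of the one-letter word `x`
is a `K`-algebra map `K⟨x⟩ → A`, because a product of words is never a single letter, and its
kernel, spanned by the longer words, is the ideal `(x²)`. The quotient `A/B` is cyclic because
`A = K·1` already is. Since all products in `A` vanish, subalgebras of `A` are just submodules,
so `B` is the ideal `(x₁, x₂, …)` of `K`, which is not finitely generated: finitely many
generators involve finitely many variables, and evaluating at the indicator of a missing variable
`xⱼ` kills all of them but not `xⱼ`.
-/

open MvPolynomial FreeSemigroup

theorem FreeSemigroup.mul_ne_of {α : Type*} (u v : FreeSemigroup α) (a : α) : u * v ≠ of a := by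
  intro h
  have := congrArg length h
  rw [length_mul, length_of] at this
  have : 0 < u.length := Nat.succ_pos _
  have : 0 < v.length := Nat.succ_pos _
  omega

section idealSpan

variable {K A : Type*} [CommRing K] [NonUnitalRing A] [Module K A] {s : Set A}

theorem subset_idealSpan : s ⊆ idealSpan K s :=
  fun _ hx => Submodule.mem_sInf.2 fun _ hJ => hJ.1 hx

theorem mul_mem_idealSpan_left (a : A) {b : A} (hb : b ∈ idealSpan K s) :
    a * b ∈ idealSpan K s :=
  Submodule.mem_sInf.2 fun J hJ => (hJ.2 a b (Submodule.mem_sInf.1 hb J hJ)).1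

theorem idealSpan_le {J : Submodule K A} (hs : s ⊆ J)
    (hJ : ∀ a b : A, b ∈ J → a * b ∈ J ∧ b * a ∈ J) : idealSpan K s ≤ J :=
  sInf_le ⟨hs, hJ⟩

end idealSpan

namespace FreeNUAlg

variable (K : Type*) [CommRing K] {X : Type*}

noncomputable def letterCoeff (a : X) : FreeNUAlg K X →ₗ[K] K :=
  Finsupp.lapply (of a) ∘ₗ (MonoidAlgebra.coeffLinearEquiv K).toLinearMap

variable {K}

theorem letterCoeff_apply (a : X) (x : FreeNUAlg K X) : letterCoeff K a x = x.coeff (of a) :=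
  rfl

theorem letterCoeff_mul (a : X) (x y : FreeNUAlg K X) : letterCoeff K a (x * y) = 0 := by
  classical
  rw [letterCoeff_apply, MonoidAlgebra.coeff_mul]
  exact Finset.sum_eq_zero fun u _ => Finset.sum_eq_zero fun v _ => if_neg (mul_ne_of u v a)

theorem single_mem_idealSpan_sq {w : FreeSemigroup (Fin 1)} (hw : w ≠ of 0) (k : K) :
    MonoidAlgebra.single w k ∈ idealSpan K {MonoidAlgebra.single (of 0 * of 0) (1 : K)} := by
  induction w using FreeSemigroup.recOnMul with
  | ih1 i => exact absurd (congrArg of (Subsingleton.elim i 0)) hw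
  | ih2 i w _ ih =>
    rw [Subsingleton.elim i 0]
    by_cases hw0 : w = of 0
    · have : MonoidAlgebra.single (of 0 * w) k = k • MonoidAlgebra.single (of 0 * of 0) 1 := by
        rw [hw0, MonoidAlgebra.smul_single, smul_eq_mul, mul_one]
      rw [this]
      exact Submodule.smul_mem _ k (subset_idealSpan rfl)
    · rw [← one_mul k, ← MonoidAlgebra.single_mul_single]
      exact mul_mem_idealSpan_left _ (ih hw0)

theorem ker_letterCoeff_eq_idealSpan_sq :
    LinearMap.ker (letterCoeff K (0 : Fin 1)) =
      idealSpan K {MonoidAlgebra.single (of 0 * of 0) (1 : K)} := by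
  refine le_antisymm (fun x hx => ?_) (idealSpan_le ?_ ?_)
  · rw [← MonoidAlgebra.sum_coeff_single x]
    refine Submodule.finsuppSum_mem K _ _ _ fun w hw => single_mem_idealSpan_sq ?_ _
    rintro rfl
    exact hw hx
  · rintro _ rfl
    exact Finsupp.single_eq_of_ne' (mul_ne_of _ _ _)
  · exact fun a b _ => ⟨letterCoeff_mul 0 a b, letterCoeff_mul 0 b a⟩

end FreeNUAlg

theorem Submodule.span_singleton_mkQ_eq_top {R M : Type*} [Ring R] [AddCommGroup M] [Module R M]
    (N : Submodule R M) {m : M} (h : span R {m} = ⊤) : span R {N.mkQ m} = ⊤ := by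
  rw [← Set.image_singleton, ← map_span, h, map_top, range_mkQ]

theorem NonUnitalAlgebra.adjoin_toSubmodule_of_mul_eq_zero {R A : Type*} [CommRing R]
    [NonUnitalRing A] [Module R A] [IsScalarTower R A A] [SMulCommClass R A A]
    (h : ∀ a b : A, a * b = 0) (s : Set A) :
    (adjoin R s).toSubmodule = Submodule.span R s := by
  refine le_antisymm (fun x hx => ?_) (Submodule.span_le.2 (subset_adjoin R))
  induction hx using adjoin_induction with
  | mem x hx => exact Submodule.subset_span hx
  | add x y _ _ hx hy => exact add_mem hx hy
  | zero => exact zero_mem _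
  | mul x y _ _ _ _ => rw [h]; exact zero_mem _
  | smul r x _ hx => exact Submodule.smul_mem _ _ hx

theorem Module.Finite.of_nuAlgFG_of_mul_eq_zero {R A : Type*} [CommRing R]
    [NonUnitalRing A] [Module R A] [IsScalarTower R A A] [SMulCommClass R A A]
    (h : ∀ a b : A, a * b = 0) (hA : NUAlgFG R A) : Module.Finite R A := by
  obtain ⟨s, hs⟩ := hA
  refine ⟨⟨s, ?_⟩⟩
  rw [← NonUnitalAlgebra.adjoin_toSubmodule_of_mul_eq_zero h, hs]
  rfl

theorem MvPolynomial.not_fg_span_range_X {σ R : Type*} [CommRing R] [Nontrivial R] [Infinite σ] :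
    ¬ (Ideal.span (Set.range X : Set (MvPolynomial σ R))).FG := by
  classical
  rintro ⟨S, hS⟩
  -- evaluate at the indicator of a variable `j` occurring in no generator
  obtain ⟨j, hj⟩ := Infinite.exists_notMem_finset (S.biUnion vars)
  have hcc : Ideal.span (Set.range X) ≤ RingHom.ker (constantCoeff : MvPolynomial σ R →+* R) :=
    Ideal.span_le.2 <| by rintro _ ⟨i, rfl⟩; exact constantCoeff_X R i
  have hS_le : Ideal.span (S : Set (MvPolynomial σ R)) ≤ RingHom.ker (eval (Pi.single j 1)) := by
    refine Ideal.span_le.2 fun p hp => ?_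
    have hvars : ∀ i ∈ p.vars, i ≠ j := fun i hi hij =>
      hj (Finset.mem_biUnion.2 ⟨p, hp, hij ▸ hi⟩)
    have hp0 : constantCoeff p = 0 := hcc (hS ▸ Ideal.subset_span hp)
    rw [SetLike.mem_coe, RingHom.mem_ker, ← hp0, ← eval_zero]
    refine hom_congr_vars (by ext; simp) (fun i hi _ => ?_) rfl
    rw [eval_X, eval_X, Pi.single_eq_of_ne (hvars i hi), Pi.zero_apply]
  have hXj : X j ∈ RingHom.ker (eval (Pi.single j (1 : R))) :=
    hS_le (hS ▸ Ideal.subset_span ⟨j, rfl⟩)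
  rw [RingHom.mem_ker, eval_X, Pi.single_eq_same] at hXj
  exact one_ne_zero hXj

open FreeNUAlg

namespace A16

noncomputable def ofFree : FreeNUAlg K16 (Fin 1) →ₙₐ[K16] A16 :=
  { toFun := fun x => toA16 (letterCoeff K16 0 x)
    map_add' := map_add _
    map_smul' := map_smul _
    map_zero' := map_zero _
    map_mul' := fun x y => (letterCoeff_mul 0 x y).trans (mul_def _ _).symm }

theorem nuAlgFP : NUAlgFP K16 A16 := by
  refine ⟨1, ofFree, fun a => ⟨MonoidAlgebra.single (of 0) a, Finsupp.single_eq_same (b := a)⟩,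
    {MonoidAlgebra.single (of 0 * of 0) 1}, fun x => ?_⟩
  rw [Finset.coe_singleton, ← ker_letterCoeff_eq_idealSpan_sq]
  rfl

theorem span_one_eq_top : Submodule.span K16 {toA16 1} = ⊤ :=
  Ideal.span_singleton_one

end A16

namespace B16

theorem toSubmodule_eq_span_range_X : B16.toSubmodule = Ideal.span (Set.range X) :=
  NonUnitalAlgebra.adjoin_toSubmodule_of_mul_eq_zero A16.mul_def _

theorem not_nuAlgFG : ¬ NUAlgFG K16 B16 := fun hB => by
  have : Module.Finite K16 B16 :=
    .of_nuAlgFG_of_mul_eq_zero (fun a b => Subtype.ext (A16.mul_def a b)) hB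
  have hfg := Module.Finite.iff_fg (N := B16.toSubmodule).1 this
  rw [toSubmodule_eq_span_range_X] at hfg
  exact MvPolynomial.not_fg_span_range_X hfg

end B16

/-- Let `K = ℤ[x₁,x₂,…]`, let `A` be the `K`-algebra whose underlying
`K`-module is `K` with identically zero multiplication, and let `B` be the `K`-subalgebra
of `A` generated by the variables. Then `A` is finitely presented as a `K`-algebra, the
quotient `K`-module `A/B` is cyclic, but `B` is not finitely generated as a `K`-algebra. -/
theorem example16 :
    NUAlgFP K16 A16 ∧
    (∃ m : A16 ⧸ B16.toSubmodule, Submodule.span K16 {m} = ⊤) ∧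
    ¬ NUAlgFG K16 B16 :=
  ⟨A16.nuAlgFP, ⟨_, B16.toSubmodule.span_singleton_mkQ_eq_top A16.span_one_eq_top⟩,
    B16.not_nuAlgFG⟩
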